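/- arXiv:2502.09377 — 2 statements merged into one kernel-verified Lean document; each statement's English description precedes it below -/
import Mathlib

section
/- For every fair division instance with exactly 3 agents and additive valuations, there exists an allocation with copies (A_1, A_2, A_3) such that v_i(A_i) ≥ μ_i^3(M) for every agent i, each good belongs to at most two of the bundles, and at most one good belongs to two bundles; that is, a single extra copy of a single good suffices to guarantee every agent their maximin share. -/
open Finset

/-- The `d`-maximin share of valuation `v` over the set `S` of goods:
the maximum over partitions of `S` into `d` bundles of the minimum bundle value. -/
noncomputable def mms {G : Type*} (v : Finset G → ℝ) (d : ℕ) (S : Finset G) : ℝ :=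
  ⨆ P : G → Fin d, ⨅ j : Fin d, v (S.filter fun g => P g = j)

section Aux

variable {G : Type*} [Fintype G] [DecidableEq G]

private lemma mms_nonneg' (w : G → ℝ) (hw : ∀ g, 0 ≤ w g) :
    0 ≤ mms (fun S => ∑ g ∈ S, w g) 3 Finset.univ := by
  classical
  unfold mms
  have hb : BddAbove (Set.range fun P : G → Fin 3 =>
      ⨅ j : Fin 3, ∑ g ∈ Finset.univ.filter (fun g => P g = j), w g) :=
    Set.Finite.bddAbove (Set.finite_range _)
  refine le_trans ?_ (le_ciSup hb (fun _ => (0 : Fin 3)))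
  exact le_ciInf fun j => Finset.sum_nonneg fun g _ => hw g

private lemma mms_le_third' (w : G → ℝ) :
    3 * mms (fun S => ∑ g ∈ S, w g) 3 Finset.univ ≤ ∑ g, w g := by
  classical
  have h : mms (fun S => ∑ g ∈ S, w g) 3 Finset.univ ≤ (∑ g, w g) / 3 := by
    unfold mms
    refine ciSup_le fun P => ?_
    have hbb : BddBelow (Set.range fun j : Fin 3 =>
        ∑ g ∈ Finset.univ.filter (fun g => P g = j), w g) :=
      Set.Finite.bddBelow (Set.finite_range _)
    have h0 := ciInf_le hbb (0 : Fin 3)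
    have h1 := ciInf_le hbb (1 : Fin 3)
    have h2 := ciInf_le hbb (2 : Fin 3)
    have hsum : ∑ j : Fin 3, ∑ g ∈ Finset.univ.filter (fun g => P g = j), w g
        = ∑ g, w g := by
      exact Finset.sum_fiberwise _ _ _
    rw [Fin.sum_univ_three] at hsum
    linarith
  linarith

private lemma mms_attained' (w : G → ℝ) :
    ∃ P : G → Fin 3, ∀ j, mms (fun S => ∑ g ∈ S, w g) 3 Finset.univ ≤
      ∑ g ∈ Finset.univ.filter (fun g => P g = j), w g := by
  classical
  obtain ⟨P0, hP0⟩ := Finite.exists_max (fun P : G → Fin 3 =>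
    ⨅ j : Fin 3, ∑ g ∈ Finset.univ.filter (fun g => P g = j), w g)
  refine ⟨P0, fun j => ?_⟩
  have h1 : mms (fun S => ∑ g ∈ S, w g) 3 Finset.univ ≤
      ⨅ j : Fin 3, ∑ g ∈ Finset.univ.filter (fun g => P0 g = j), w g := ciSup_le hP0
  exact h1.trans (ciInf_le (Set.Finite.bddBelow (Set.finite_range _)) j)

/-- Cut-and-choose with at most one shared good. -/
private lemma cutchoose (w0 w1 : G → ℝ) (S : Finset G) (μ0 μ1 : ℝ)
    (hμ0 : 0 ≤ μ0) (hμ1 : 0 ≤ μ1)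
    (h0 : 2 * μ0 < ∑ g ∈ S, w0 g) (h1 : 2 * μ1 < ∑ g ∈ S, w1 g) :
    ∃ X Y : Finset G, X ⊆ S ∧ Y ⊆ S ∧ (X ∩ Y).card ≤ 1 ∧
      μ0 ≤ ∑ g ∈ X, w0 g ∧ μ1 ≤ ∑ g ∈ Y, w1 g := by
  classical
  set C := S.powerset.filter (fun X => μ0 ≤ ∑ g ∈ X, w0 g) with hC
  have hSC : S ∈ C := by
    rw [hC, Finset.mem_filter, Finset.mem_powerset]
    exact ⟨le_refl _, by linarith⟩
  obtain ⟨X, hXC, hXmin⟩ := C.exists_min_image Finset.card ⟨S, hSC⟩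
  rw [hC, Finset.mem_filter, Finset.mem_powerset] at hXC
  obtain ⟨hXS, hX0⟩ := hXC
  rcases X.eq_empty_or_nonempty with rfl | ⟨g, hg⟩
  · exact ⟨∅, S, Finset.empty_subset _, le_refl _, by simp, hX0, by linarith⟩
  · have hXgS : X.erase g ⊆ S := (Finset.erase_subset _ _).trans hXS
    have hminlt : ∑ a ∈ X.erase g, w0 a < μ0 := by
      by_contra hcon
      push_neg at hcon
      have hmem : X.erase g ∈ C := by
        rw [hC, Finset.mem_filter, Finset.mem_powerset]; exact ⟨hXgS, hcon⟩
      have h1' := hXmin _ hmem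
      have h2' := Finset.card_erase_lt_of_mem hg
      omega
    have hsplit0 : ∑ a ∈ S \ (X.erase g), w0 a
        = ∑ a ∈ S, w0 a - ∑ a ∈ X.erase g, w0 a := Finset.sum_sdiff_eq_sub hXgS
    have hsplit1 : ∑ a ∈ S \ (X.erase g), w1 a
        = ∑ a ∈ S, w1 a - ∑ a ∈ X.erase g, w1 a := Finset.sum_sdiff_eq_sub hXgS
    by_cases hcase : μ1 ≤ ∑ a ∈ S \ (X.erase g), w1 a
    · refine ⟨X, S \ (X.erase g), hXS, Finset.sdiff_subset, ?_, hX0, hcase⟩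
      have hsub : X ∩ (S \ (X.erase g)) ⊆ {g} := by
        intro a ha
        simp only [Finset.mem_inter, Finset.mem_sdiff, Finset.mem_erase] at ha
        simp only [Finset.mem_singleton]
        by_contra hne
        exact ha.2.2 ⟨hne, ha.1⟩
      exact (Finset.card_le_card hsub).trans (by simp)
    · push_neg at hcase
      refine ⟨S \ (X.erase g), X.erase g, Finset.sdiff_subset, hXgS, ?_, ?_, ?_⟩
      · have hd : (S \ (X.erase g)) ∩ (X.erase g) = ∅ := by
          apply Finset.eq_empty_of_forall_notMem
          intro a ha
          simp only [Finset.mem_inter, Finset.mem_sdiff] at ha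
          exact ha.1.2 ha.2
        simp [hd]
      · rw [hsplit0]; linarith
      · linarith

end Aux

/-- Every instance with exactly 3 agents and additive valuations admits an
allocation with copies giving each agent her maximin share, in which every good belongs to
at most two bundles and at most one good belongs to two bundles. -/
theorem stmt6 {G : Type*} [Fintype G] [DecidableEq G]
    (w : Fin 3 → G → ℝ)
    (hw : ∀ i g, 0 ≤ w i g) :
    ∃ A : Fin 3 → Finset G,
      (∀ i, mms (fun S => ∑ g ∈ S, w i g) 3 Finset.univ ≤ ∑ g ∈ A i, w i g) ∧
      (∀ g : G, (Finset.univ.filter fun i => g ∈ A i).card ≤ 2) ∧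
      (Finset.univ.filter fun g : G =>
        (Finset.univ.filter fun i => g ∈ A i).card = 2).card ≤ 1 := by
  classical
  set μ : Fin 3 → ℝ := fun i => mms (fun S => ∑ g ∈ S, w i g) 3 Finset.univ with hμdef
  have hμ0 : ∀ i, 0 ≤ μ i := fun i => mms_nonneg' (w i) (hw i)
  have hμT : ∀ i, 3 * μ i ≤ ∑ g, w i g := fun i => mms_le_third' (w i)
  -- agent 2's optimal partition
  obtain ⟨P, hP⟩ := mms_attained' (w 2)
  set Q : Fin 3 → Finset G := fun j => Finset.univ.filter (fun g => P g = j) with hQdef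
  have hQsum : ∀ i : Fin 3, ∑ j : Fin 3, ∑ g ∈ Q j, w i g = ∑ g, w i g := by
    intro i; exact Finset.sum_fiberwise _ _ _
  have hQmem : ∀ g j, g ∈ Q j ↔ P g = j := by
    intro g j; simp [hQdef]
  -- each of agents 0,1 accepts some bundle
  have haccept : ∀ i : Fin 3, ∃ j, μ i ≤ ∑ g ∈ Q j, w i g := by
    intro i
    by_contra hcon
    push_neg at hcon
    have h0 := hcon 0; have h1 := hcon 1; have h2 := hcon 2
    have hs := hQsum i
    rw [Fin.sum_univ_three] at hs
    have := hμT i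
    linarith
  by_cases hA : ∃ j k : Fin 3, j ≠ k ∧ μ 0 ≤ ∑ g ∈ Q j, w 0 g ∧ μ 1 ≤ ∑ g ∈ Q k, w 1 g
  · -- Case A: disjoint allocation
    obtain ⟨j, k, hjk, h0, h1⟩ := hA
    have hex : ∀ j k : Fin 3, ∃ l, l ≠ j ∧ l ≠ k := by decide
    obtain ⟨l, hlj, hlk⟩ := hex j k
    have hinj : ∀ a b : Fin 3, (![j, k, l] : Fin 3 → Fin 3) a = ![j, k, l] b → a = b := by
      intro a b h
      fin_cases a <;> fin_cases b <;> simp_all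
    have hAQ : ∀ i : Fin 3, (![Q j, Q k, Q l] : Fin 3 → Finset G) i = Q (![j, k, l] i) := by
      intro i; fin_cases i <;> rfl
    have hcard : ∀ g : G,
        (Finset.univ.filter fun i : Fin 3 => g ∈ (![Q j, Q k, Q l] : Fin 3 → Finset G) i).card ≤ 1 := by
      intro g
      apply Finset.card_le_one.mpr
      intro a ha b hb
      rw [Finset.mem_filter] at ha hb
      have ha' := (hQmem g _).mp ((hAQ a) ▸ ha.2)
      have hb' := (hQmem g _).mp ((hAQ b) ▸ hb.2)
      exact hinj a b (by rw [← ha', ← hb'])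
    refine ⟨![Q j, Q k, Q l], ?_, ?_, ?_⟩
    · intro i
      fin_cases i
      · simpa using h0
      · simpa using h1
      · simpa using hP l
    · intro g
      exact (hcard g).trans (by norm_num)
    · have hempty : (Finset.univ.filter fun g : G =>
          (Finset.univ.filter fun i => g ∈ (![Q j, Q k, Q l] : Fin 3 → Finset G) i).card = 2) = ∅ := by
        apply Finset.eq_empty_of_forall_notMem
        intro g hgmem
        rw [Finset.mem_filter] at hgmem
        have h2 : (Finset.univ.filter fun i : Fin 3 =>
            g ∈ (![Q j, Q k, Q l] : Fin 3 → Finset G) i).card = 2 := hgmem.2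
        have := hcard g
        omega
      rw [hempty]; simp
  · -- Case B
    push_neg at hA
    obtain ⟨j, hj⟩ := haccept 0
    obtain ⟨k, hk⟩ := haccept 1
    have hkj : k = j := by
      by_contra hne
      exact absurd hk (not_le.mpr (hA j k (fun h => hne h.symm) hj))
    have claim0 : ∀ m, m ≠ j → ∑ g ∈ Q m, w 0 g < μ 0 := by
      intro m hm
      by_contra hcon
      push_neg at hcon
      have := hA m k (by rw [hkj]; exact hm) hcon
      linarith
    have claim1 : ∀ m, m ≠ j → ∑ g ∈ Q m, w 1 g < μ 1 := by
      intro m hm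
      by_contra hcon
      push_neg at hcon
      have := hA j m (fun h => hm h.symm) hj
      linarith
    have hexl : ∀ j : Fin 3, ∃ l : Fin 3, l ≠ j := by decide
    obtain ⟨l, hlj⟩ := hexl j
    set S : Finset G := Finset.univ \ Q l with hS
    have hQl : Q l ⊆ Finset.univ := Finset.subset_univ _
    have hSsum : ∀ i : Fin 3, ∑ g ∈ S, w i g = ∑ g, w i g - ∑ g ∈ Q l, w i g := by
      intro i; exact Finset.sum_sdiff_eq_sub hQl
    have h0S : 2 * μ 0 < ∑ g ∈ S, w 0 g := by
      have := claim0 l hlj; have := hμT 0; rw [hSsum 0]; linarith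
    have h1S : 2 * μ 1 < ∑ g ∈ S, w 1 g := by
      have := claim1 l hlj; have := hμT 1; rw [hSsum 1]; linarith
    obtain ⟨X, Y, hXS, hYS, hXY, hX, hY⟩ :=
      cutchoose (w 0) (w 1) S (μ 0) (μ 1) (hμ0 0) (hμ0 1) h0S h1S
    have hXl : ∀ g, g ∈ X → g ∉ Q l := by
      intro g hgX hgQ
      have := hXS hgX
      rw [hS, Finset.mem_sdiff] at this
      exact this.2 hgQ
    have hYl : ∀ g, g ∈ Y → g ∉ Q l := by
      intro g hgY hgQ
      have := hYS hgY
      rw [hS, Finset.mem_sdiff] at this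
      exact this.2 hgQ
    have hfiltersub : ∀ g : G, g ∉ Q l →
        (Finset.univ.filter fun i : Fin 3 => g ∈ (![X, Y, Q l] : Fin 3 → Finset G) i)
          ⊆ ({0, 1} : Finset (Fin 3)) := by
      intro g hgQ i hi
      rw [Finset.mem_filter] at hi
      fin_cases i
      · simp
      · simp
      · exfalso
        have : g ∈ Q l := by simpa using hi.2
        exact hgQ this
    have hfiltersub2 : ∀ g : G, g ∈ Q l →
        (Finset.univ.filter fun i : Fin 3 => g ∈ (![X, Y, Q l] : Fin 3 → Finset G) i)
          ⊆ ({2} : Finset (Fin 3)) := by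
      intro g hgQ i hi
      rw [Finset.mem_filter] at hi
      fin_cases i
      · exfalso
        have : g ∈ X := by simpa using hi.2
        exact hXl g this hgQ
      · exfalso
        have : g ∈ Y := by simpa using hi.2
        exact hYl g this hgQ
      · simp
    refine ⟨![X, Y, Q l], ?_, ?_, ?_⟩
    · intro i
      fin_cases i
      · simpa using hX
      · simpa using hY
      · simpa using hP l
    · intro g
      by_cases hgQ : g ∈ Q l
      · have := Finset.card_le_card (hfiltersub2 g hgQ)
        simp only [Finset.card_singleton] at this
        omega
      · have := Finset.card_le_card (hfiltersub g hgQ)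
        have h2 : ({0, 1} : Finset (Fin 3)).card = 2 := by decide
        omega
    · have hsub : (Finset.univ.filter fun g : G =>
          (Finset.univ.filter fun i => g ∈ (![X, Y, Q l] : Fin 3 → Finset G) i).card = 2)
            ⊆ X ∩ Y := by
        intro g hg
        rw [Finset.mem_filter] at hg
        have h2 : (Finset.univ.filter fun i : Fin 3 =>
            g ∈ (![X, Y, Q l] : Fin 3 → Finset G) i).card = 2 := hg.2
        by_cases hgQ : g ∈ Q l
        · exfalso
          have := Finset.card_le_card (hfiltersub2 g hgQ)
          simp only [Finset.card_singleton] at this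
          omega
        · have hsub' := hfiltersub g hgQ
          have hcard01 : ({0, 1} : Finset (Fin 3)).card = 2 := by decide
          have heq : (Finset.univ.filter fun i : Fin 3 =>
              g ∈ (![X, Y, Q l] : Fin 3 → Finset G) i) = ({0, 1} : Finset (Fin 3)) :=
            Finset.eq_of_subset_of_card_le hsub' (by omega)
          have h0mem : (0 : Fin 3) ∈ Finset.univ.filter fun i : Fin 3 =>
              g ∈ (![X, Y, Q l] : Fin 3 → Finset G) i := by
            rw [heq]; simp
          have h1mem : (1 : Fin 3) ∈ Finset.univ.filter fun i : Fin 3 =>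
              g ∈ (![X, Y, Q l] : Fin 3 → Finset G) i := by
            rw [heq]; simp
          rw [Finset.mem_filter] at h0mem h1mem
          have hgX : g ∈ X := by simpa using h0mem.2
          have hgY : g ∈ Y := by simpa using h1mem.2
          exact Finset.mem_inter.mpr ⟨hgX, hgY⟩
      exact (Finset.card_le_card hsub).trans hXY
end

section
/- Let M be a finite set of goods, let v : 2^M → ℝ≥0 be an additive valuation, let n ≥ 2 be an integer, and let g_1, g_2 ∈ M be two distinct goods with v({g_1}) + v({g_2}) ≤ μ^n(M). Then μ^n(M) ≤ μ^{n−1}(M \ {g_1, g_2}), where μ^d(S) denotes the maximum over all partitions of S into d bundles of the minimum value of a bundle under v. -/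
/-!
Take a partition of the goods into `n` bundles attaining `μ^n(M)`, so every bundle is worth at
least `μ^n(M)`. Delete `g₁, g₂` and merge the bundle of `g₂` into the bundle of `g₁` (into any
other bundle if the two coincide). The merged bundle is worth at least
`2 μ^n(M) - v(g₁) - v(g₂) ≥ μ^n(M)`, and every other bundle is untouched, so the resulting
`n - 1` bundles certify `μ^n(M) ≤ μ^{n-1}(M \ {g₁, g₂})`.
-/

open Finset

theorem exists_forall_le_mms {G : Type*} [Finite G] (v : Finset G → ℝ) (d : ℕ) [NeZero d]
    (S : Finset G) : ∃ P : G → Fin d, ∀ j, mms v d S ≤ v (S.filter fun g => P g = j) := by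
  obtain ⟨P, hP⟩ := exists_eq_ciSup_of_finite
    (f := fun P : G → Fin d => ⨅ j, v (S.filter fun g => P g = j))
  exact ⟨P, fun j => (hP.symm.trans_le (ciInf_le (Finite.bddBelow_range _) j) :)⟩

theorem le_mms_of_forall_le {G ι : Type*} [Finite G] [Fintype ι] [DecidableEq ι] [Nonempty ι]
    (v : Finset G → ℝ) (S : Finset G) (P : G → ι) {c : ℝ}
    (hP : ∀ i, c ≤ v (S.filter fun g => P g = i)) : c ≤ mms v (Fintype.card ι) S := by
  let e := Fintype.equivFin ι
  refine le_ciSup_of_le (Finite.bddAbove_range _) (e ∘ P) (le_ciInf fun j => ?_)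
  refine (hP (e.symm j)).trans_eq (congrArg v (filter_congr fun g _ => ?_))
  exact e.eq_symm_apply

section Merge

variable {ι : Type*} [DecidableEq ι]

def mergeInto {b t : ι} (ht : t ≠ b) (i : ι) : {i // i ≠ b} :=
  if h : i = b then ⟨t, ht⟩ else ⟨i, h⟩

theorem mergeInto_eq_iff {b t : ι} (ht : t ≠ b) (i : ι) (j : {i // i ≠ b}) :
    mergeInto ht i = j ↔ i = j ∨ (i = b ∧ t = j) := by
  unfold mergeInto
  split_ifs with h <;> simp [Subtype.ext_iff, h, j.2.symm]

theorem exists_forall_le_sum_sdiff_pair {G : Type*} [DecidableEq G] [Nontrivial ι]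
    (w : G → ℝ) (S : Finset G) (P : G → ι) {μ : ℝ}
    (hP : ∀ i, μ ≤ ∑ g ∈ S.filter (fun g => P g = i), w g)
    {g₁ g₂ : G} (h₁ : g₁ ∈ S) (h₂ : g₂ ∈ S) (hne : g₁ ≠ g₂) (hval : w g₁ + w g₂ ≤ μ) :
    ∃ Q : G → {i // i ≠ P g₂}, ∀ j, μ ≤ ∑ g ∈ (S \ {g₁, g₂}).filter (fun g => Q g = j), w g := by
  obtain ⟨t, ht₂, ht₁⟩ : ∃ t, t ≠ P g₂ ∧ (P g₁ = t ∨ P g₁ = P g₂) := by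
    by_cases h : P g₁ = P g₂
    · obtain ⟨t, ht⟩ := exists_ne (P g₂)
      exact ⟨t, ht, .inr h⟩
    · exact ⟨P g₁, h, .inl rfl⟩
  refine ⟨fun g => mergeInto ht₂ (P g), fun j => ?_⟩
  simp only [mergeInto_eq_iff]
  by_cases hj : (j : ι) = t
  · have hpair : {g₁, g₂} ⊆ S.filter (P · = t) ∪ S.filter (P · = P g₂) := by
      grind
    have hbundle : (S \ {g₁, g₂}).filter (fun g => P g = j ∨ (P g = P g₂ ∧ t = j)) =
        (S.filter (P · = t) ∪ S.filter (P · = P g₂)) \ {g₁, g₂} := by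
      ext g
      simp only [hj, mem_filter, mem_sdiff, mem_union]
      tauto
    rw [hbundle, sum_sdiff_eq_sub hpair, sum_union (disjoint_filter.2 fun g _ h => h ▸ ht₂),
      sum_pair hne]
    linarith [hP t, hP (P g₂)]
  · have hbundle : (S \ {g₁, g₂}).filter (fun g => P g = j ∨ (P g = P g₂ ∧ t = j)) =
        S.filter (P · = j) := by
      ext g
      have := j.2
      simp only [mem_filter, mem_sdiff, mem_insert, mem_singleton]
      grind
    rw [hbundle]
    exact hP j

end Merge

theorem stmt13_general {G : Type*} [Fintype G] [DecidableEq G]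
    (w : G → ℝ) (n : ℕ) (hn : 2 ≤ n)
    (g₁ g₂ : G) (hne : g₁ ≠ g₂)
    (hval : w g₁ + w g₂ ≤ mms (fun S => ∑ g ∈ S, w g) n Finset.univ) :
    mms (fun S => ∑ g ∈ S, w g) n Finset.univ ≤
      mms (fun S => ∑ g ∈ S, w g) (n - 1) (Finset.univ \ {g₁, g₂}) := by
  have : NeZero n := ⟨by omega⟩
  have : Nontrivial (Fin n) := Fin.nontrivial_iff_two_le.mpr hn
  obtain ⟨P, hP⟩ := exists_forall_le_mms (fun S => ∑ g ∈ S, w g) n univ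
  obtain ⟨Q, hQ⟩ :=
    exists_forall_le_sum_sdiff_pair w univ P hP (mem_univ g₁) (mem_univ g₂) hne hval
  have : Nonempty {i // i ≠ P g₂} := let ⟨i, hi⟩ := exists_ne (P g₂); ⟨⟨i, hi⟩⟩
  simpa using le_mms_of_forall_le (fun S => ∑ g ∈ S, w g) _ Q hQ

/-- For an additive valuation (weights `w`), `n ≥ 2`, and two distinct goods
`g₁, g₂` with `w g₁ + w g₂ ≤ μ^n(M)`, removing `g₁, g₂` and one agent does not decrease the
maximin share: `μ^n(M) ≤ μ^{n−1}(M \ {g₁, g₂})`. -/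
theorem stmt13 {G : Type*} [Fintype G] [DecidableEq G]
    (w : G → ℝ) (hw : ∀ g, 0 ≤ w g) (n : ℕ) (hn : 2 ≤ n)
    (g₁ g₂ : G) (hne : g₁ ≠ g₂)
    (hval : w g₁ + w g₂ ≤ mms (fun S => ∑ g ∈ S, w g) n Finset.univ) :
    mms (fun S => ∑ g ∈ S, w g) n Finset.univ ≤
      mms (fun S => ∑ g ∈ S, w g) (n - 1) (Finset.univ \ {g₁, g₂}) :=
  stmt13_general w n hn g₁ g₂ hne hval
end
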